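/- arXiv:2305.15120 — 2 statements merged into one kernel-verified Lean document; each statement's English description precedes it below -/
import Mathlib

section
/- Let q ≡ 1 (mod 6) be a prime power and χ a primitive cubic character of genus g over 𝔽_q[T] which is even. Then for every integer A with 0 ≤ A ≤ g and every s ∈ ℂ with q^s ≠ 1, q, one has 𝓛(q^{−s}, χ) = (1 − q^{1−s})^{−1}·[ ∑_{f∈𝓜_{≤A+1}} χ(f)/|f|^s − q^{1−s} ∑_{f∈𝓜_{≤A}} χ(f)/|f|^s ] + (1 − q^s)^{−1} · ω(χ)·q^{−(s−1/2)g} · (ζ_q(2−s)/ζ_q(s+1)) · [ ∑_{f∈𝓜_{≤ g−A}} χ̄(f)/|f|^{1−s} − q^s ∑_{f∈𝓜_{≤ g−A−1}} χ̄(f)/|f|^{1−s} ]. -/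
open Polynomial Finset Filter
open scoped Classical

noncomputable section

/-- The monic polynomial `X^n + ∑_{i<n} c i · X^i`; as `c` ranges over `Fin n → Fq`
this parametrizes the monic polynomials of degree `n` over `Fq`. -/
def monicOf {Fq : Type} [Field Fq] (n : ℕ) (c : Fin n → Fq) : Polynomial Fq :=
  X ^ n + ∑ i : Fin n, C (c i) * X ^ (i : ℕ)

/-- Sum of `φ` over the monic polynomials of degree `n` in `Fq[T]`. -/
def sumMonic {Fq : Type} [Field Fq] [Fintype Fq] (n : ℕ) (φ : Polynomial Fq → ℂ) : ℂ :=
  ∑ c : Fin n → Fq, φ (monicOf n c)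

/-- Sum of `φ` over the squarefree monic polynomials of degree `n` in `Fq[T]`. -/
def sumSqfree {Fq : Type} [Field Fq] [Fintype Fq] (n : ℕ) (φ : Polynomial Fq → ℂ) : ℂ :=
  ∑ c : Fin n → Fq, if Squarefree (monicOf n c) then φ (monicOf n c) else 0

/-- `L(s,χ) = ∑_{F monic} χ(F)|F|^{-s}`, grouped by degree.  For the characters in this
paper the coefficient sums vanish in large degree, so this is a finite sum giving the
analytic continuation of the Dirichlet series. -/
def Lval {Fq : Type} [Field Fq] [Fintype Fq] (q : ℕ) (s : ℝ) (χ : Polynomial Fq → ℂ) : ℂ :=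
  ∑' n : ℕ, sumMonic n χ * ((q : ℝ) ^ (-s * (n : ℝ)) : ℝ)

/-- `𝓛(u,χ) = ∑_{F monic} χ(F) u^{deg F}`, grouped by degree. -/
def Lu {Fq : Type} [Field Fq] [Fintype Fq] (u : ℂ) (χ : Polynomial Fq → ℂ) : ℂ :=
  ∑' n : ℕ, sumMonic n χ * u ^ n

/-- `chi` is the family of cubic residue symbols `chi F = χ_F` on `Fq[T]` determined by the
isomorphism `Ω` from the cube roots of unity of `Fq^*` to `μ₃ ⊂ ℂ^*`. -/
structure IsCubicSymbol (q : ℕ) {Fq : Type} [Field Fq] [Fintype Fq]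
    (Ω : Fq → ℂ) (chi : Polynomial Fq → Polynomial Fq → ℂ) : Prop where
  omega_mul : ∀ a b : Fq, a ^ 3 = 1 → b ^ 3 = 1 → Ω (a * b) = Ω a * Ω b
  omega_cube : ∀ a : Fq, a ^ 3 = 1 → (Ω a) ^ 3 = 1
  omega_inj : ∀ a b : Fq, a ^ 3 = 1 → b ^ 3 = 1 → Ω a = Ω b → a = b
  omega_surj : ∀ z : ℂ, z ^ 3 = 1 → ∃ a : Fq, a ^ 3 = 1 ∧ Ω a = z
  chi_one : ∀ a : Polynomial Fq, chi 1 a = 1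
  chi_mul_left : ∀ F G a : Polynomial Fq, F.Monic → G.Monic →
    chi (F * G) a = chi F a * chi G a
  chi_prime_dvd : ∀ P a : Polynomial Fq, P.Monic → Irreducible P → P ∣ a → chi P a = 0
  chi_prime_not_dvd : ∀ P a : Polynomial Fq, P.Monic → Irreducible P → ¬ P ∣ a →
    ∃ c : Fq, c ^ 3 = 1 ∧ Ω c = chi P a ∧ P ∣ (a ^ ((q ^ P.natDegree - 1) / 3) - C c)

/-- The monic irreducible polynomials over `Fq`. -/
def MonicIrred (Fq : Type) [Field Fq] : Type := {P : Polynomial Fq // P.Monic ∧ Irreducible P}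

/-- `|P| = q^{deg P}` as a real number. -/
def normP {Fq : Type} [Field Fq] (q : ℕ) (P : MonicIrred Fq) : ℝ := (q : ℝ) ^ P.1.natDegree

/-- `C_q = ∏_P (1 - 1/(|P|(|P|+1)))`. -/
def Cq (q : ℕ) (Fq : Type) [Field Fq] : ℝ :=
  ∏' P : MonicIrred Fq, (1 - (normP q P * (normP q P + 1))⁻¹)

/-- `M_q(s) = ζ_q(3s) ∏_P (1 - |P|^{-3s}/(|P|+1))`. -/
def Mq (q : ℕ) (Fq : Type) [Field Fq] (s : ℝ) : ℝ :=
  (1 - (q : ℝ) ^ (1 - 3 * s))⁻¹ *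
    ∏' P : MonicIrred Fq, (1 - (normP q P) ^ (-3 * s) * (normP q P + 1)⁻¹)


/-- `ζ_q(s) = (1 - q^{1-s})⁻¹`, as a function of a complex variable. -/
def zetaq (q : ℕ) (s : ℂ) : ℂ := (1 - (q : ℂ) ^ ((1 : ℂ) - s))⁻¹

/-! Write `a n` for the coefficients of `𝓛(u, χ)` and `β n = a 0 + ⋯ + a (n - 1)` for their
partial sums (`cumSum`). Summation by parts gives `u 𝓛(u, χ) = (1 - u) ∑ β n uⁿ` because
`β (g + 2) = 𝓛(1, χ) = 0`, so the functional equation of `𝓛_C` becomes the coefficient symmetry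
`q^(g+1) β j = ω √q^g q^j conj (β k)` for `j + k = g + 2`. Split `∑ β n uⁿ` at `n = A + 2`: the
head is the first truncated sum, and the symmetry turns the tail into the dual truncated sum in
`v = q^(s-1) = 1/(qu)`. Truncating each sum leaves a boundary term, and the two boundary terms
cancel. -/

section CumSum

variable {R : Type*} [CommRing R]

def cumSum (a : ℕ → R) (n : ℕ) : R := ∑ m ∈ range n, a m

@[simp] lemma cumSum_zero (a : ℕ → R) : cumSum a 0 = 0 := sum_range_zero a

lemma cumSum_succ (a : ℕ → R) (n : ℕ) : cumSum a (n + 1) = cumSum a n + a n :=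
  sum_range_succ a n

lemma mul_sum_range_mul_pow_by_parts (a : ℕ → R) (x : R) (N : ℕ) :
    x * ∑ n ∈ range N, a n * x ^ n =
      (1 - x) * ∑ n ∈ range N, cumSum a n * x ^ n + cumSum a N * x ^ N := by
  induction N with
  | zero => simp
  | succ N ih =>
    rw [sum_range_succ, mul_add, ih, sum_range_succ, cumSum_succ]
    ring

lemma mul_truncated_sum_by_parts (q x : R) (a : ℕ → R) (N : ℕ) :
    x * (∑ n ∈ range (N + 1), a n * x ^ n - q * x * ∑ n ∈ range N, a n * x ^ n) =
      (1 - x) * (1 - q * x) * ∑ n ∈ range (N + 1), cumSum a n * x ^ n +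
        x ^ (N + 1) * (cumSum a (N + 1) - q * x * cumSum a N) := by
  have hsucc := mul_sum_range_mul_pow_by_parts a x (N + 1)
  have h := mul_sum_range_mul_pow_by_parts a x N
  rw [sum_range_succ (fun n => cumSum a n * x ^ n)] at hsucc ⊢
  linear_combination hsucc - q * x * h

end CumSum

section Field

variable {K : Type*} [Field K]

lemma sum_range_mul_pow_div_one_sub {a : ℕ → K} {N : ℕ} (ha : cumSum a N = 0) {x : K}
    (hx : x ≠ 0) (hx1 : x ≠ 1) :
    (∑ n ∈ range N, a n * x ^ n) / (1 - x) = x⁻¹ * ∑ n ∈ range (N + 1), cumSum a n * x ^ n := by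
  have h := mul_sum_range_mul_pow_by_parts a x N
  rw [ha, zero_mul, add_zero] at h
  rw [sum_range_succ, ha, zero_mul, add_zero, div_eq_iff (sub_ne_zero.mpr hx1.symm),
    mul_right_comm, mul_assoc, eq_inv_mul_iff_mul_eq₀ hx, h]

lemma pow_mul_sum_range_inv_pow (c : ℕ → K) {x : K} (hx : x ≠ 0) (N : ℕ) :
    x ^ N * ∑ k ∈ range (N + 1), c k * x⁻¹ ^ k = ∑ j ∈ range (N + 1), c (N - j) * x ^ j := by
  rw [← sum_range_reflect (fun j => c (N - j) * x ^ j), mul_sum]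
  refine sum_congr rfl fun k hk => ?_
  have hkN : k ≤ N := Nat.lt_succ_iff.mp (mem_range.mp hk)
  rw [show N + 1 - 1 - k = N - k by omega, Nat.sub_sub_self hkN, pow_sub₀ x hx hkN, inv_pow]
  ring

lemma eq_of_sum_range_mul_pow_eq [Infinite K] {c d : ℕ → K} {N : ℕ} {S : Set K}
    (hS : S.Finite) (h : ∀ w ∉ S, ∑ n ∈ range N, c n * w ^ n = ∑ n ∈ range N, d n * w ^ n) :
    ∀ n < N, c n = d n := by
  have hpoly : ∑ n ∈ range N, C (c n) * X ^ n = ∑ n ∈ range N, C (d n) * X ^ n := by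
    refine eq_of_infinite_eval_eq _ _ (hS.infinite_compl.mono fun w hw => ?_)
    simpa [eval_finsetSum] using h w hw
  intro n hn
  simpa [finsetSum_coeff, coeff_C_mul, coeff_X_pow, hn] using congrArg (coeff · n) hpoly

theorem cumSum_functional_equation [Infinite K] {q ω σ : K} (hq : q ≠ 0) {a b : ℕ → K} {g : ℕ}
    (ha : cumSum a (g + 2) = 0) (hb : cumSum b (g + 2) = 0)
    (hFE : ∀ w : K, w ≠ 0 → w ≠ 1 → q * w ≠ 1 →
      (∑ n ∈ range (g + 2), a n * w ^ n) / (1 - w) =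
        ω * (σ * w) ^ g * ((∑ n ∈ range (g + 2), b n * (1 / (q * w)) ^ n) / (1 - 1 / (q * w))))
    (j k : ℕ) (hjk : j + k = g + 2) :
    q ^ (g + 1) * cumSum a j = ω * σ ^ g * q ^ j * cumSum b k := by
  have hcoeff := eq_of_sum_range_mul_pow_eq (N := g + 3)
    (c := fun j => q ^ (g + 1) * cumSum a j) (d := fun j => ω * σ ^ g * q ^ j * cumSum b (g + 2 - j))
    (((Set.finite_singleton q⁻¹).insert 1).insert 0) (fun w hw => ?_) j (by omega)
  · rwa [show g + 2 - j = k by omega] at hcoeff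
  simp only [Set.mem_insert_iff, Set.mem_singleton_iff, not_or] at hw
  obtain ⟨hw0, hw1, hwq⟩ := hw
  have hqw0 : q * w ≠ 0 := mul_ne_zero hq hw0
  have hqw1 : q * w ≠ 1 := fun h => hwq (eq_inv_of_mul_eq_one_right h)
  have hz1 : 1 / (q * w) ≠ 1 := by rwa [ne_eq, div_eq_one_iff_eq hqw0, eq_comm]
  calc ∑ n ∈ range (g + 3), q ^ (g + 1) * cumSum a n * w ^ n
      = q ^ (g + 1) * w * ((∑ n ∈ range (g + 2), a n * w ^ n) / (1 - w)) := by
        rw [sum_range_mul_pow_div_one_sub ha hw0 hw1, mul_sum, mul_sum]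
        refine sum_congr rfl fun n _ => ?_
        field_simp
    _ = ω * σ ^ g * ((q * w) ^ (g + 2) * ∑ n ∈ range (g + 3), cumSum b n * (q * w)⁻¹ ^ n) := by
        rw [hFE w hw0 hw1 hqw1, sum_range_mul_pow_div_one_sub hb (one_div_ne_zero hqw0) hz1,
          one_div, inv_inv]
        ring
    _ = ∑ n ∈ range (g + 3), ω * σ ^ g * q ^ n * cumSum b (g + 2 - n) * w ^ n := by
        rw [pow_mul_sum_range_inv_pow _ hqw0, mul_sum]
        refine sum_congr rfl fun n _ => ?_
        ring

section Reflection

variable {q ω σ u v : K} {a b : ℕ → K} {g : ℕ}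

lemma mul_mul_pow_eq_of_coeff_symm {x y : K} (hq : q ≠ 0) (hu : u ≠ 0) (huv : q * u * v = 1)
    {j k : ℕ} (hjk : j + k = g + 2) (hxy : q ^ (g + 1) * x = ω * σ ^ g * q ^ k * y) :
    ω * (σ * u) ^ g * (y * v ^ j) = v * u⁻¹ * (x * u ^ k) := by
  obtain rfl : v = (q * u)⁻¹ := eq_inv_of_mul_eq_one_right huv
  have hqpow : q ^ (g + 2) = q ^ j * q ^ k := by rw [← pow_add, hjk]
  have hupow : u ^ (g + 2) = u ^ j * u ^ k := by rw [← pow_add, hjk]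
  calc ω * (σ * u) ^ g * (y * (q * u)⁻¹ ^ j)
      = ω * σ ^ g * q ^ k * y * u ^ g / (q ^ k * (q * u) ^ j) := by
        rw [inv_pow, mul_pow]
        field_simp
    _ = q ^ (g + 1) * x * u ^ g / (q ^ k * (q * u) ^ j) := by rw [hxy]
    _ = (q * u)⁻¹ * u⁻¹ * (x * u ^ k) := by
        field_simp
        linear_combination x * u ^ (g + 2) * hqpow + x * q ^ j * q ^ k * hupow

lemma mul_sum_range_cumSum_dual (hq : q ≠ 0) (hu : u ≠ 0) (huv : q * u * v = 1)
    (hab : ∀ j k, j + k = g + 2 → q ^ (g + 1) * cumSum a j = ω * σ ^ g * q ^ j * cumSum b k)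
    {A B : ℕ} (hAB : A + B = g) :
    ω * (σ * u) ^ g * ∑ j ∈ range (B + 1), cumSum b j * v ^ j =
      v * u⁻¹ * ∑ k ∈ Ico (A + 2) (g + 3), cumSum a k * u ^ k := by
  rw [mul_sum, mul_sum, sum_Ico_eq_sum_range, show g + 3 - (A + 2) = B + 1 by omega,
    ← sum_range_reflect]
  refine sum_congr rfl fun j hj => ?_
  have hj : j < B + 1 := mem_range.mp hj
  exact mul_mul_pow_eq_of_coeff_symm hq hu huv (by omega) (hab _ _ (by omega))

lemma mul_dual_truncated_sum_eq (hq : q ≠ 0) (hu : u ≠ 0) (hu1 : u ≠ 1) (hqu : q * u ≠ 1)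
    (huv : q * u * v = 1)
    (hab : ∀ j k, j + k = g + 2 → q ^ (g + 1) * cumSum a j = ω * σ ^ g * q ^ j * cumSum b k)
    {A B : ℕ} (hAB : A + B = g) :
    u * ((1 - q * v)⁻¹ * ω * (σ * u) ^ g * ((1 - v)⁻¹ / (1 - u)⁻¹) *
      (∑ n ∈ range (B + 1), b n * v ^ n - q * v * ∑ n ∈ range B, b n * v ^ n)) =
      (1 - u) * ∑ k ∈ Ico (A + 2) (g + 3), cumSum a k * u ^ k +
        u ^ (A + 2) * (q * u * cumSum a (A + 1) - cumSum a (A + 2)) / (1 - q * u) := by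
  have hv : v ≠ 0 := right_ne_zero_of_mul_eq_one huv
  have h1u : 1 - u ≠ 0 := sub_ne_zero.mpr (Ne.symm hu1)
  have h1uq : 1 - u * q ≠ 0 := sub_ne_zero.mpr (by rwa [mul_comm, ne_comm])
  have h1v : 1 - v ≠ 0 := by
    refine sub_ne_zero.mpr fun h => hqu ?_
    rwa [← h, mul_one] at huv
  have h1qv : 1 - q * v ≠ 0 := by
    refine sub_ne_zero.mpr fun h => hu1 ?_
    linear_combination huv + u * h
  have hterm : ∀ j k, j + k = g + 2 →
      ω * (σ * u) ^ g * (cumSum b j * v ^ j) = v * u⁻¹ * (cumSum a k * u ^ k) :=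
    fun j k hjk => mul_mul_pow_eq_of_coeff_symm hq hu huv hjk (hab k j (by omega))
  have hdual : ω * (σ * u) ^ g *
      (v * (∑ n ∈ range (B + 1), b n * v ^ n - q * v * ∑ n ∈ range B, b n * v ^ n)) =
      v * u⁻¹ * ((1 - v) * (1 - q * v) * ∑ k ∈ Ico (A + 2) (g + 3), cumSum a k * u ^ k +
        (cumSum a (A + 1) * u ^ (A + 1) - q * v * v * (cumSum a (A + 2) * u ^ (A + 2)))) := by
    rw [mul_truncated_sum_by_parts q v b B]
    linear_combination (1 - v) * (1 - q * v) * mul_sum_range_cumSum_dual hq hu huv hab hAB +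
      hterm (B + 1) (A + 1) (by omega) - q * v * v * hterm B (A + 2) (by omega)
  calc _ = u * (1 - u) / ((1 - q * v) * (1 - v) * v) * (ω * (σ * u) ^ g *
        (v * (∑ n ∈ range (B + 1), b n * v ^ n - q * v * ∑ n ∈ range B, b n * v ^ n))) := by
        field_simp
    _ = _ := by
        rw [hdual]
        field_simp
        linear_combination u ^ (A + 1) * (cumSum a (A + 1) * (u + q * u - 1 - q * u * v) +
          cumSum a (A + 2) * (u * v + q * u * v - u - q * u * v * u)) * huv

end Reflection

theorem sum_range_eq_approximate_functional_equation {q ω σ u v : K} (hq : q ≠ 0) (hu : u ≠ 0)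
    (hu1 : u ≠ 1) (hqu : q * u ≠ 1) (huv : q * u * v = 1) {a b : ℕ → K} {g : ℕ}
    (hab : ∀ j k, j + k = g + 2 → q ^ (g + 1) * cumSum a j = ω * σ ^ g * q ^ j * cumSum b k)
    (A : ℕ) (hA : A ≤ g) :
    ∑ n ∈ range (g + 2), a n * u ^ n =
      (1 - q * u)⁻¹ *
          (∑ n ∈ range (A + 2), a n * u ^ n - q * u * ∑ n ∈ range (A + 1), a n * u ^ n) +
        (1 - q * v)⁻¹ * ω * (σ * u) ^ g * ((1 - v)⁻¹ / (1 - u)⁻¹) *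
          (∑ n ∈ range (g - A + 1), b n * v ^ n - q * v * ∑ n ∈ range (g - A), b n * v ^ n) := by
  obtain ⟨B, hAB⟩ : ∃ B, A + B = g := ⟨g - A, by omega⟩
  rw [show g - A = B by omega]
  have hβ : cumSum a (g + 2) = 0 := by simpa [hq] using hab (g + 2) 0 rfl
  have hwhole : u * ∑ n ∈ range (g + 2), a n * u ^ n = (1 - u) *
      (∑ k ∈ range (A + 2), cumSum a k * u ^ k +
        ∑ k ∈ Ico (A + 2) (g + 3), cumSum a k * u ^ k) := by
    rw [sum_range_add_sum_Ico _ (by omega), sum_range_succ (fun k => cumSum a k * u ^ k),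
      mul_sum_range_mul_pow_by_parts, hβ]
    ring
  have hfirst : u * ((1 - q * u)⁻¹ *
      (∑ n ∈ range (A + 2), a n * u ^ n - q * u * ∑ n ∈ range (A + 1), a n * u ^ n)) =
      (1 - u) * ∑ k ∈ range (A + 2), cumSum a k * u ^ k +
        u ^ (A + 2) * (cumSum a (A + 2) - q * u * cumSum a (A + 1)) / (1 - q * u) := by
    have h1qu : 1 - q * u ≠ 0 := sub_ne_zero.mpr (Ne.symm hqu)
    rw [mul_left_comm, mul_truncated_sum_by_parts q u a (A + 1)]
    field_simp
  apply mul_left_cancel₀ hu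
  rw [hwhole, mul_add u, hfirst, mul_dual_truncated_sum_eq hq hu hu1 hqu huv hab hAB]
  ring

end Field

section LFunction

variable {Fq : Type} [Field Fq] [Fintype Fq]

lemma Lu_eq_sum_range {φ : Polynomial Fq → ℂ} {N : ℕ} (h : ∀ n, N ≤ n → sumMonic n φ = 0)
    (u : ℂ) : Lu u φ = ∑ n ∈ range N, sumMonic n φ * u ^ n :=
  tsum_eq_sum fun n hn => by rw [h n (by simpa using hn), zero_mul]

lemma sumMonic_conj (φ : Polynomial Fq → ℂ) (n : ℕ) :
    sumMonic n (fun f => starRingEnd ℂ (φ f)) = starRingEnd ℂ (sumMonic n φ) :=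
  (map_sum _ _ _).symm

theorem cumSum_sumMonic_functional_equation {q ω σ : ℂ} (hq : q ≠ 0) {χ : Polynomial Fq → ℂ}
    {g : ℕ} (hpoly : ∀ n : ℕ, g + 1 < n → sumMonic n χ = 0) (hvanish : Lu 1 χ = 0)
    (hFE : ∀ u : ℂ, u ≠ 0 → u ≠ 1 → q * u ≠ 1 →
      Lu u χ / (1 - u) =
        ω * (σ * u) ^ g * (Lu (1 / (q * u)) (fun f => starRingEnd ℂ (χ f)) / (1 - 1 / (q * u))))
    (j k : ℕ) (hjk : j + k = g + 2) :
    q ^ (g + 1) * cumSum (fun n => sumMonic n χ) j =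
      ω * σ ^ g * q ^ j * cumSum (fun n => sumMonic n (fun f => starRingEnd ℂ (χ f))) k := by
  have hsum := Lu_eq_sum_range (N := g + 2) hpoly
  have hsum_conj := Lu_eq_sum_range (N := g + 2) (φ := fun f => starRingEnd ℂ (χ f))
    fun n hn => by rw [sumMonic_conj, hpoly n hn, map_zero]
  have ha : cumSum (fun n => sumMonic n χ) (g + 2) = 0 := by
    simpa [hsum, cumSum] using hvanish
  have hb : cumSum (fun n => sumMonic n (fun f => starRingEnd ℂ (χ f))) (g + 2) = 0 := by
    simp only [cumSum, sumMonic_conj, ← map_sum]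
    rw [← cumSum, ha, map_zero]
  refine cumSum_functional_equation hq ha hb (fun w hw0 hw1 hqw => ?_) j k hjk
  simpa only [hsum, hsum_conj] using hFE w hw0 hw1 hqw

end LFunction

lemma ne_zero_of_cpow_ne_one_of_cpow_ne_self {z s : ℂ} (h1 : z ^ s ≠ 1) (hz : z ^ s ≠ z) :
    z ≠ 0 := by
  rintro rfl
  rcases eq_or_ne s 0 with rfl | hs
  · exact h1 (Complex.cpow_zero _)
  · exact hz (Complex.zero_cpow hs)

lemma natCast_cpow_neg_sub_half {q : ℕ} (hq : (q : ℂ) ≠ 0) (s : ℂ) :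
    (q : ℂ) ^ (-(s - 1 / 2)) = ((Real.sqrt q : ℝ) : ℂ) * (q : ℂ) ^ (-s) := by
  rw [show -(s - 1 / 2) = ((1 / 2 : ℝ) : ℂ) + -s by push_cast; ring, Complex.cpow_add _ _ hq,
    Real.sqrt_eq_rpow, Complex.ofReal_cpow (Nat.cast_nonneg q)]
  rfl

theorem approximate_functional_equation_even_general
    (q : ℕ) (Fq : Type) [Field Fq] [Fintype Fq]
    (χ : Polynomial Fq → ℂ)
    (g : ℕ)
    (ω : ℂ)
    (hpoly : ∀ n : ℕ, g + 1 < n → sumMonic n χ = 0)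
    (hvanish : Lu 1 χ = 0)
    (hFE : ∀ u : ℂ, u ≠ 0 → u ≠ 1 → (q : ℂ) * u ≠ 1 →
      Lu u χ / (1 - u) =
        ω * (((Real.sqrt q : ℝ) : ℂ) * u) ^ g *
          (Lu (1 / ((q : ℂ) * u)) (fun f => (starRingEnd ℂ) (χ f)) /
            (1 - 1 / ((q : ℂ) * u)))) :
    ∀ A : ℕ, A ≤ g → ∀ s : ℂ, (q : ℂ) ^ s ≠ 1 → (q : ℂ) ^ s ≠ (q : ℂ) →
      Lu ((q : ℂ) ^ (-s)) χ =
        (1 - (q : ℂ) ^ ((1 : ℂ) - s))⁻¹ *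
          ((∑ n ∈ Finset.range (A + 2), sumMonic n χ * (q : ℂ) ^ (-s * (n : ℂ))) -
            (q : ℂ) ^ ((1 : ℂ) - s) *
              ∑ n ∈ Finset.range (A + 1), sumMonic n χ * (q : ℂ) ^ (-s * (n : ℂ))) +
        (1 - (q : ℂ) ^ s)⁻¹ * ω * (q : ℂ) ^ (-(s - 1 / 2) * (g : ℂ)) *
          (zetaq q (2 - s) / zetaq q (s + 1)) *
          ((∑ n ∈ Finset.range (g - A + 1),
              sumMonic n (fun f => (starRingEnd ℂ) (χ f)) * (q : ℂ) ^ (-(1 - s) * (n : ℂ))) -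
            (q : ℂ) ^ s *
              ∑ n ∈ Finset.range (g - A),
                sumMonic n (fun f => (starRingEnd ℂ) (χ f)) *
                  (q : ℂ) ^ (-(1 - s) * (n : ℂ))) := by
  intro A hA s hs1 hs2
  have hq : (q : ℂ) ≠ 0 := ne_zero_of_cpow_ne_one_of_cpow_ne_self hs1 hs2
  have hab := cumSum_sumMonic_functional_equation hq hpoly hvanish hFE
  set u := (q : ℂ) ^ (-s) with hu_def
  set v := (q : ℂ) ^ (s - 1) with hv_def
  have hu : u = ((q : ℂ) ^ s)⁻¹ := Complex.cpow_neg _ _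
  have hqs0 : (q : ℂ) ^ s ≠ 0 := by simp [Complex.cpow_eq_zero_iff, hq]
  have hu0 : u ≠ 0 := by rw [hu]; exact inv_ne_zero hqs0
  have hu1 : u ≠ 1 := by rw [hu]; exact fun h => hs1 (inv_eq_one.mp h)
  have h1s : (q : ℂ) ^ ((1 : ℂ) - s) = q * u := by
    rw [Complex.cpow_sub _ _ hq, Complex.cpow_one, hu, div_eq_mul_inv]
  have hqu : (q : ℂ) * u ≠ 1 := by
    rw [hu]; exact fun h => hs2 ((mul_inv_eq_one₀ hqs0).mp h).symm
  have huv : (q : ℂ) * u * v = 1 := by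
    rw [← h1s, hv_def, ← Complex.cpow_add _ _ hq, sub_add_sub_cancel', sub_self, Complex.cpow_zero]
  have hqs : (q : ℂ) ^ s = q * v := by
    rw [hv_def, Complex.cpow_sub _ _ hq, Complex.cpow_one]
    field_simp
  have hζ : zetaq q (2 - s) / zetaq q (s + 1) = (1 - v)⁻¹ / (1 - u)⁻¹ := by
    rw [zetaq, zetaq, show (1 : ℂ) - (2 - s) = s - 1 by ring, show (1 : ℂ) - (s + 1) = -s by ring]
  rw [Lu_eq_sum_range (N := g + 2) hpoly, h1s, hqs, hζ, mul_comm _ (g : ℂ), Complex.cpow_nat_mul,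
    natCast_cpow_neg_sub_half hq]
  simp only [Complex.cpow_mul_nat, neg_sub, ← hu_def, ← hv_def]
  exact sum_range_eq_approximate_functional_equation hq hu0 hu1 hqu huv hab A hA

/-- **Approximate functional equation, even case.** Here `χ` is a primitive cubic character
of modulus (conductor) `m` over `𝔽_q[T]` which is even; its genus is `g = deg m - 2`.
The hypotheses `hpoly`, `hvanish`, `habs`, `hFE` record the facts (from the Weil
conjectures) that `𝓛_C(u,χ) = 𝓛(u,χ)/(1-u)` is a polynomial of degree `g` satisfying the
functional equation `𝓛_C(u,χ) = ω(χ)(√q u)^g 𝓛_C(1/(qu), χ̄)` with `|ω(χ)| = 1`. -/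
theorem approximate_functional_equation_even
    (q : ℕ) (Fq : Type) [Field Fq] [Fintype Fq]
    (hq : IsPrimePow q) (hq6 : q % 6 = 1) (hcard : Fintype.card Fq = q)
    (χ : Polynomial Fq → ℂ) (m : Polynomial Fq) (hm : m.Monic)
    (hmul : ∀ f h : Polynomial Fq, χ (f * h) = χ f * χ h)
    (hcubic : ∀ f : Polynomial Fq, χ f = 0 ∨ (χ f) ^ 3 = 1)
    (hperiodic : ∀ f h : Polynomial Fq, m ∣ (f - h) → χ f = χ h)
    (hzero : ∀ f : Polynomial Fq, χ f = 0 ↔ ¬ IsCoprime f m)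
    (hprimitive : ∀ d : Polynomial Fq, d.Monic → d ∣ m → d ≠ m →
      ¬ (∀ f h : Polynomial Fq, IsCoprime f m → IsCoprime h m → d ∣ (f - h) → χ f = χ h))
    (heven : ∀ c : Fq, c ≠ 0 → χ (C c) = 1)
    (g : ℕ) (hgenus : m.natDegree = g + 2)
    (ω : ℂ) (habs : ‖ω‖ = 1)
    (hpoly : ∀ n : ℕ, g + 1 < n → sumMonic n χ = 0)
    (hvanish : Lu 1 χ = 0)
    (hFE : ∀ u : ℂ, u ≠ 0 → u ≠ 1 → (q : ℂ) * u ≠ 1 →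
      Lu u χ / (1 - u) =
        ω * (((Real.sqrt q : ℝ) : ℂ) * u) ^ g *
          (Lu (1 / ((q : ℂ) * u)) (fun f => (starRingEnd ℂ) (χ f)) /
            (1 - 1 / ((q : ℂ) * u)))) :
    ∀ A : ℕ, A ≤ g → ∀ s : ℂ, (q : ℂ) ^ s ≠ 1 → (q : ℂ) ^ s ≠ (q : ℂ) →
      Lu ((q : ℂ) ^ (-s)) χ =
        (1 - (q : ℂ) ^ ((1 : ℂ) - s))⁻¹ *
          ((∑ n ∈ Finset.range (A + 2), sumMonic n χ * (q : ℂ) ^ (-s * (n : ℂ))) -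
            (q : ℂ) ^ ((1 : ℂ) - s) *
              ∑ n ∈ Finset.range (A + 1), sumMonic n χ * (q : ℂ) ^ (-s * (n : ℂ))) +
        (1 - (q : ℂ) ^ s)⁻¹ * ω * (q : ℂ) ^ (-(s - 1 / 2) * (g : ℂ)) *
          (zetaq q (2 - s) / zetaq q (s + 1)) *
          ((∑ n ∈ Finset.range (g - A + 1),
              sumMonic n (fun f => (starRingEnd ℂ) (χ f)) * (q : ℂ) ^ (-(1 - s) * (n : ℂ))) -
            (q : ℂ) ^ s *
              ∑ n ∈ Finset.range (g - A),
                sumMonic n (fun f => (starRingEnd ℂ) (χ f)) *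
                  (q : ℂ) ^ (-(1 - s) * (n : ℂ))) :=
  approximate_functional_equation_even_general q Fq χ g ω hpoly hvanish hFE
end
end

section
/- Let q ≡ 1 (mod 6) be a prime power and for g ≥ 1 let 𝔥(g) be the set of cubic characters χ_F, with F monic squarefree, whose genus equals g. Then |𝔥(g)| = q^{g+1} − q^{g} if g ≡ 0 (mod 3), |𝔥(g)| = q^{g+2} − q^{g} if g ≡ 1 (mod 3), and 𝔥(g) is empty if g ≡ 2 (mod 3). Moreover, in the case g ≡ 0 (mod 3) every χ ∈ 𝔥(g) is odd with conductor of degree g+1, and in the case g ≡ 1 (mod 3) the characters of 𝔥(g) are those with squarefree conductor of degree g+1 (odd) or g+2 (even). -/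
open Polynomial Finset Filter
open scoped Classical

noncomputable section

/-- `χ_F` is even, i.e. its restriction to `𝔽_q^*` is trivial. -/
def IsEvenChar {Fq : Type} [Field Fq]
    (chi : Polynomial Fq → Polynomial Fq → ℂ) (F : Polynomial Fq) : Prop :=
  ∀ c : Fq, c ≠ 0 → chi F (C c) = 1

/-- The genus of the character `χ_F` (for `F` squarefree the conductor is `F` itself):
`g = deg(cond χ) - 2 + δ_χ`, as an integer. -/
def genusChar {Fq : Type} [Field Fq]
    (chi : Polynomial Fq → Polynomial Fq → ℂ) (F : Polynomial Fq) : ℤ :=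
  (F.natDegree : ℤ) - 2 + (if IsEvenChar chi F then 0 else 1)

variable {Fq : Type} [Field Fq]

lemma coeff_monicOf (n : ℕ) (c : Fin n → Fq) (j : ℕ) :
    (monicOf n c).coeff j = (if j = n then 1 else 0) + if h : j < n then c ⟨j, h⟩ else 0 := by
  rw [monicOf, coeff_add, coeff_X_pow, finset_sum_coeff]
  congr 1
  simp only [coeff_C_mul, coeff_X_pow]
  by_cases h : j < n
  · rw [dif_pos h, Finset.sum_eq_single (⟨j, h⟩ : Fin n)]
    · simp
    · intro b _ hb
      simp only [mul_ite, mul_one, mul_zero, ite_eq_right_iff]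
      intro he
      exact absurd (Fin.ext he.symm) hb
    · simp
  · rw [dif_neg h, Finset.sum_eq_zero]
    intro b _
    have : j ≠ (b : ℕ) := fun he => h (he ▸ b.2)
    simp [this]

lemma monicOf_natDegree (n : ℕ) (c : Fin n → Fq) : (monicOf n c).natDegree = n := by
  have h1 : (monicOf n c).coeff n = 1 := by simp [coeff_monicOf]
  have hle : (monicOf n c).natDegree ≤ n := by
    apply natDegree_le_iff_coeff_eq_zero.2
    intro m hm
    rw [coeff_monicOf, if_neg (by omega), dif_neg (by omega), add_zero]
  exact le_antisymm hle (le_natDegree_of_ne_zero (by simp [h1]))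

lemma monicOf_monic (n : ℕ) (c : Fin n → Fq) : (monicOf n c).Monic := by
  unfold Polynomial.Monic Polynomial.leadingCoeff
  rw [monicOf_natDegree]
  simp [coeff_monicOf]

lemma monicOf_injective (n : ℕ) : Function.Injective (monicOf (Fq := Fq) n) := by
  intro c d h
  funext i
  have := congrArg (fun p => Polynomial.coeff p i) h
  simpa [coeff_monicOf, (by omega : (i:ℕ) ≠ n), i.2] using this

lemma mem_range_monicOf {n : ℕ} {F : Polynomial Fq} :
    F ∈ Set.range (monicOf n) ↔ F.Monic ∧ F.natDegree = n := by
  constructor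
  · rintro ⟨c, rfl⟩; exact ⟨monicOf_monic n c, monicOf_natDegree n c⟩
  · rintro ⟨hm, hd⟩
    refine ⟨fun i => F.coeff i, ?_⟩
    ext j
    rw [coeff_monicOf]
    rcases lt_trichotomy j n with h | h | h
    · rw [if_neg (by omega), dif_pos h]; simp
    · subst h; rw [if_pos rfl, dif_neg (lt_irrefl j), add_zero, ← hd]; exact hm.symm
    · rw [if_neg (by omega), dif_neg (by omega), add_zero]
      exact (coeff_eq_zero_of_natDegree_lt (by omega)).symm

/-- Uniqueness of the decomposition `f = a * b ^ 2` with `a` squarefree monic, `b` monic. -/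
lemma sqdecomp_unique : ∀ (m : ℕ) (a₁ b₁ a₂ b₂ : Polynomial Fq), b₁.natDegree = m →
    a₁.Monic → Squarefree a₁ → b₁.Monic → a₂.Monic → Squarefree a₂ → b₂.Monic →
    a₁ * b₁ ^ 2 = a₂ * b₂ ^ 2 → a₁ = a₂ ∧ b₁ = b₂ := by
  intro m
  induction m using Nat.strong_induction_on with
  | _ m ih =>
    intro a₁ b₁ a₂ b₂ hdeg ha₁ hs₁ hb₁ ha₂ hs₂ hb₂ heq
    -- key claim: for any prime, p ∣ b₁ → p ∣ b₂ and symmetric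
    have key : ∀ (a b a' b' : Polynomial Fq), Squarefree a' → a * b ^ 2 = a' * b' ^ 2 →
        ∀ p : Polynomial Fq, Prime p → p ∣ b → p ∣ b' := by
      intro a b a' b' hs' he p hp hpb
      by_contra hpb'
      have hpb2 : ¬ p ∣ b' ^ 2 := fun h => hpb' (hp.dvd_of_dvd_pow h)
      have h2 : p ^ 2 ∣ a' * b' ^ 2 := he ▸ (dvd_mul_of_dvd_right (pow_dvd_pow_of_dvd hpb 2) a)
      have hpa : p ^ 2 ∣ a' := hp.pow_dvd_of_dvd_mul_right 2 hpb2 h2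
      exact hp.not_isUnit (hs' p (by rwa [← sq]))
    -- if b₁ is a unit and b₂ is a unit we are done; otherwise strip a common prime
    by_cases hu : IsUnit b₁
    · have hb1 : b₁ = 1 := hb₁.eq_one_of_isUnit hu
      have hb2 : b₂ = 1 := by
        by_contra hne
        obtain ⟨p, hpm, hpi, hpd⟩ := Polynomial.exists_monic_irreducible_factor b₂
          (fun h => hne (hb₂.eq_one_of_isUnit h))
        have := key a₂ b₂ a₁ b₁ hs₁ heq.symm p hpi.prime hpd
        rw [hb1] at this
        exact hpi.not_isUnit (isUnit_of_dvd_one this)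
      subst hb1 hb2
      simpa using heq
    · obtain ⟨p, hpm, hpi, hpd⟩ := Polynomial.exists_monic_irreducible_factor b₁ hu
      have hpd2 : p ∣ b₂ := key a₁ b₁ a₂ b₂ hs₂ heq p hpi.prime hpd
      obtain ⟨c₁, rfl⟩ := hpd
      obtain ⟨c₂, rfl⟩ := hpd2
      have hc₁ : c₁.Monic := hpm.of_mul_monic_left hb₁
      have hc₂ : c₂.Monic := hpm.of_mul_monic_left hb₂
      have hp0 : p ≠ 0 := hpi.ne_zero
      have hcancel : a₁ * c₁ ^ 2 = a₂ * c₂ ^ 2 := by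
        have h : p ^ 2 * (a₁ * c₁ ^ 2) = p ^ 2 * (a₂ * c₂ ^ 2) := by
          rw [show p ^ 2 * (a₁ * c₁ ^ 2) = a₁ * (p * c₁) ^ 2 by ring, heq]; ring
        exact mul_left_cancel₀ (pow_ne_zero 2 hp0) h
      have hlt : c₁.natDegree < m := by
        have hpd1 : 1 ≤ p.natDegree := hpi.natDegree_pos
        have : (p * c₁).natDegree = p.natDegree + c₁.natDegree :=
          natDegree_mul hp0 hc₁.ne_zero
        omega
      obtain ⟨h1, h2⟩ := ih c₁.natDegree hlt a₁ c₁ a₂ c₂ rfl ha₁ hs₁ hc₁ ha₂ hs₂ hc₂ hcancel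
      exact ⟨h1, by rw [h2]⟩

/-- Existence of the decomposition. -/
lemma sqdecomp_exists : ∀ (m : ℕ) (f : Polynomial Fq), f.natDegree = m → f.Monic →
    ∃ a b : Polynomial Fq, a.Monic ∧ Squarefree a ∧ b.Monic ∧ f = a * b ^ 2 := by
  intro m
  induction m using Nat.strong_induction_on with
  | _ m ih =>
    intro f hdeg hf
    by_cases hs : Squarefree f
    · exact ⟨f, 1, hf, hs, monic_one, by ring⟩
    · rw [Squarefree] at hs
      push_neg at hs
      obtain ⟨x, hxd, hxu⟩ := hs
      obtain ⟨p, hpm, hpi, hpd⟩ := Polynomial.exists_monic_irreducible_factor x hxu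
      have hp2 : p ^ 2 ∣ f := by
        calc p ^ 2 ∣ x * x := by rw [sq]; exact mul_dvd_mul hpd hpd
        _ ∣ f := hxd
      obtain ⟨g, rfl⟩ := hp2
      have hp0 : p ≠ 0 := hpi.ne_zero
      have hg : g.Monic := (hpm.pow 2).of_mul_monic_left hf
      have hlt : g.natDegree < m := by
        have hpd1 : 1 ≤ p.natDegree := hpi.natDegree_pos
        have h1 : (p ^ 2 * g).natDegree = (p ^ 2).natDegree + g.natDegree :=
          natDegree_mul (pow_ne_zero 2 hp0) hg.ne_zero
        have h2 : (p ^ 2).natDegree = 2 * p.natDegree := by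
          rw [natDegree_pow]
        omega
      obtain ⟨a, b, ha, hsa, hb, rfl⟩ := ih g.natDegree hlt g rfl hg
      exact ⟨a, p * b, ha, hsa, hpm.mul hb, by ring⟩

variable [Fintype Fq]

/-- Finset of monic polynomials of degree `n`. -/
def Mf (Fq : Type) [Field Fq] [Fintype Fq] (n : ℕ) : Finset (Polynomial Fq) :=
  Finset.univ.image (monicOf n)

/-- Finset of squarefree monic polynomials of degree `n`. -/
def Sqf (Fq : Type) [Field Fq] [Fintype Fq] (n : ℕ) : Finset (Polynomial Fq) :=
  (Mf Fq n).filter Squarefree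

lemma mem_Mf {n : ℕ} {F : Polynomial Fq} : F ∈ Mf Fq n ↔ F.Monic ∧ F.natDegree = n := by
  rw [Mf, Finset.mem_image, ← mem_range_monicOf]
  simp [Set.mem_range]

lemma mem_Sqf {n : ℕ} {F : Polynomial Fq} :
    F ∈ Sqf Fq n ↔ F.Monic ∧ Squarefree F ∧ F.natDegree = n := by
  rw [Sqf, Finset.mem_filter, mem_Mf]; tauto

lemma card_Mf (n : ℕ) : (Mf Fq n).card = Fintype.card Fq ^ n := by
  rw [Mf, Finset.card_image_of_injective _ (monicOf_injective n), Finset.card_univ,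
    Fintype.card_fun, Fintype.card_fin]

lemma Mf_eq_biUnion (n : ℕ) :
    Mf Fq n = (Finset.range (n / 2 + 1)).biUnion
      (fun k => ((Sqf Fq (n - 2 * k)) ×ˢ (Mf Fq k)).image fun ab => ab.1 * ab.2 ^ 2) := by
  ext F
  simp only [Finset.mem_biUnion, Finset.mem_range, Finset.mem_image, Finset.mem_product,
    mem_Mf, mem_Sqf, Prod.exists]
  constructor
  · rintro ⟨hm, hd⟩
    obtain ⟨a, b, ha, hsa, hb, rfl⟩ := sqdecomp_exists F.natDegree F rfl hm
    have hdeg : a.natDegree + 2 * b.natDegree = n := by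
      rw [← hd, natDegree_mul ha.ne_zero (pow_ne_zero 2 hb.ne_zero), natDegree_pow]
    exact ⟨b.natDegree, by omega, a, b, ⟨⟨ha, hsa, by omega⟩, hb, rfl⟩, rfl⟩
  · rintro ⟨k, hk, a, b, ⟨⟨ha, hsa, hda⟩, hb, hdb⟩, rfl⟩
    refine ⟨ha.mul (hb.pow 2), ?_⟩
    rw [natDegree_mul ha.ne_zero (pow_ne_zero 2 hb.ne_zero), natDegree_pow, hda, hdb]
    omega

lemma card_Mf_sum (n : ℕ) :
    Fintype.card Fq ^ n = ∑ k ∈ Finset.range (n / 2 + 1),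
      (Sqf Fq (n - 2 * k)).card * Fintype.card Fq ^ k := by
  rw [← card_Mf n, Mf_eq_biUnion n, Finset.card_biUnion]
  · refine Finset.sum_congr rfl fun k hk => ?_
    rw [Finset.card_image_of_injOn, Finset.card_product, card_Mf]
    rintro ⟨a₁, b₁⟩ h₁ ⟨a₂, b₂⟩ h₂ heq
    simp only [Finset.mem_coe, Finset.mem_product, mem_Sqf, mem_Mf] at h₁ h₂
    obtain ⟨h1, h2⟩ := sqdecomp_unique b₁.natDegree a₁ b₁ a₂ b₂ rfl h₁.1.1 h₁.1.2.1 h₁.2.1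
      h₂.1.1 h₂.1.2.1 h₂.2.1 heq
    exact Prod.ext h1 h2
  · intro k₁ _ k₂ _ hne
    simp only [Finset.disjoint_left, Finset.mem_image, Finset.mem_product, Prod.exists]
    rintro F ⟨a₁, b₁, h₁, rfl⟩ ⟨a₂, b₂, h₂, heq⟩
    simp only [Finset.mem_product, mem_Sqf, mem_Mf] at h₁ h₂
    obtain ⟨-, h2⟩ := sqdecomp_unique b₁.natDegree a₁ b₁ a₂ b₂ rfl h₁.1.1 h₁.1.2.1 h₁.2.1
      h₂.1.1 h₂.1.2.1 h₂.2.1 heq.symm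
    exact hne (by rw [← h₁.2.2, ← h₂.2.2, h2])

lemma card_Sqf (n : ℕ) (hn : 2 ≤ n) :
    Fintype.card Fq ^ n = Fintype.card Fq ^ (n - 1) + (Sqf Fq n).card := by
  have h1 := card_Mf_sum (Fq := Fq) n
  have h2 := card_Mf_sum (Fq := Fq) (n - 2)
  have hh : n / 2 + 1 = ((n - 2) / 2 + 1) + 1 := by omega
  rw [hh, Finset.sum_range_succ'] at h1
  have : ∀ k ∈ Finset.range ((n - 2) / 2 + 1),
      (Sqf Fq (n - 2 * (k + 1))).card * Fintype.card Fq ^ (k + 1) =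
      Fintype.card Fq * ((Sqf Fq (n - 2 - 2 * k)).card * Fintype.card Fq ^ k) := by
    intro k _
    have : n - 2 * (k + 1) = n - 2 - 2 * k := by omega
    rw [this, pow_succ]; ring
  rw [Finset.sum_congr rfl this, ← Finset.mul_sum, ← h2] at h1
  have hq : Fintype.card Fq * Fintype.card Fq ^ (n - 2) = Fintype.card Fq ^ (n - 1) := by
    rw [← pow_succ']; congr 1; omega
  rw [hq] at h1
  simpa [Nat.sub_zero, mul_one] using h1

section CharTheory

variable {q : ℕ} {Ω : Fq → ℂ} {chi : Polynomial Fq → Polynomial Fq → ℂ}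
variable (hq : IsPrimePow q) (hq6 : q % 6 = 1) (hcard : Fintype.card Fq = q)
variable (hchi : IsCubicSymbol q Ω chi)

include hq hq6 in
lemma q_ge_7 : 7 ≤ q := by
  have := hq.two_le
  omega

include hchi in
lemma omega_one : Ω 1 = 1 := by
  have h := hchi.omega_mul 1 1 (one_pow 3) (one_pow 3)
  rw [mul_one] at h
  have h3 := hchi.omega_cube 1 (one_pow 3)
  have hne : Ω 1 ≠ 0 := fun h0 => by simp [h0] at h3
  field_simp at h
  tauto

include hcard in
lemma pow_q_sub_one {c : Fq} (hc : c ≠ 0) : c ^ (q - 1) = 1 := by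
  rw [← hcard]
  exact FiniteField.pow_card_sub_one_eq_one c hc

include hq hq6 hcard in
lemma cube_root_pow {c : Fq} (hc : c ≠ 0) : (c ^ ((q - 1) / 3)) ^ 3 = 1 := by
  rw [← pow_mul, Nat.div_mul_cancel (by omega : (3:ℕ) ∣ q - 1)]
  exact pow_q_sub_one hcard hc

lemma geom_nat (q m : ℕ) (hq1 : 1 ≤ q) : (q - 1) * ∑ i ∈ Finset.range m, q ^ i = q ^ m - 1 := by
  induction m with
  | zero => simp
  | succ m ih =>
    rw [Finset.sum_range_succ, Nat.mul_add, ih, pow_succ]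
    have h1 : 1 ≤ q ^ m := Nat.one_le_pow m q hq1
    have h2 : q ^ m ≤ q ^ m * q := Nat.le_mul_of_pos_right _ hq1
    have h3 : (q - 1) * q ^ m = q ^ m * q - q ^ m := by rw [Nat.sub_mul, one_mul, mul_comm]
    omega

lemma pow_eq_of_mod3 {x : Fq} (hx : x ^ 3 = 1) {a b : ℕ} (h : a % 3 = b % 3) :
    x ^ a = x ^ b := by
  conv_lhs => rw [← Nat.div_add_mod a 3]
  conv_rhs => rw [← Nat.div_add_mod b 3]
  rw [pow_add, pow_add, pow_mul, pow_mul, hx, one_pow, one_pow, h]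

include hq hq6 hcard in
lemma pow_exp_eq {c : Fq} (hc : c ≠ 0) (m : ℕ) :
    c ^ ((q ^ m - 1) / 3) = (c ^ ((q - 1) / 3)) ^ m := by
  have h7 := q_ge_7 hq hq6
  obtain ⟨t, ht⟩ : ∃ t, q - 1 = 3 * t := ⟨(q - 1) / 3, by omega⟩
  set S := ∑ i ∈ Finset.range m, q ^ i with hS
  have h1 : q ^ m - 1 = (q - 1) * S := (geom_nat q m (by omega)).symm
  have h2 : (q ^ m - 1) / 3 = t * S := by
    rw [h1, ht, mul_assoc, Nat.mul_div_cancel_left _ (by norm_num)]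
  have ht3 : (q - 1) / 3 = t := by omega
  rw [h2, ht3, pow_mul]
  have hx3 : (c ^ t) ^ 3 = 1 := by
    rw [← pow_mul, mul_comm, ← ht]; exact pow_q_sub_one hcard hc
  apply pow_eq_of_mod3 hx3
  -- S % 3 = m % 3
  clear h1 h2
  induction m with
  | zero => simp [hS]
  | succ m ihm =>
    rw [hS, Finset.sum_range_succ]
    have hqm : q ^ m % 3 = 1 := by
      rw [Nat.pow_mod, (by omega : q % 3 = 1), Nat.one_pow]
    omega

include hq hq6 hcard hchi in
lemma chi_prime_eval {P : Polynomial Fq} (hPm : P.Monic) (hPi : Irreducible P)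
    {c : Fq} (hc : c ≠ 0) :
    chi P (C c) = Ω ((c ^ ((q - 1) / 3)) ^ P.natDegree) := by
  have hnd : ¬ P ∣ C c := by
    intro h
    exact hPi.not_isUnit (isUnit_of_dvd_unit h ((isUnit_C).mpr hc.isUnit))
  obtain ⟨d, hd3, hdΩ, hdvd⟩ := hchi.chi_prime_not_dvd P (C c) hPm hPi hnd
  have hC : (C c) ^ ((q ^ P.natDegree - 1) / 3) - C d = C (c ^ ((q ^ P.natDegree - 1) / 3) - d) := by
    rw [map_sub, map_pow]
  rw [hC] at hdvd
  have hzero : c ^ ((q ^ P.natDegree - 1) / 3) - d = 0 := by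
    by_contra hne
    exact hPi.not_isUnit (isUnit_of_dvd_unit hdvd ((isUnit_C).mpr (isUnit_iff_ne_zero.mpr hne)))
  have hd : d = c ^ ((q ^ P.natDegree - 1) / 3) := by
    have := sub_eq_zero.mp hzero
    exact this.symm
  rw [← hdΩ, hd, pow_exp_eq hq hq6 hcard hc]

include hq hq6 hcard hchi in
lemma chi_monic_eval : ∀ (n : ℕ) (F : Polynomial Fq), F.natDegree = n → F.Monic →
    ∀ {c : Fq}, c ≠ 0 → chi F (C c) = Ω ((c ^ ((q - 1) / 3)) ^ F.natDegree) := by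
  intro n
  induction n using Nat.strong_induction_on with
  | _ n ih =>
    intro F hdeg hF c hc
    rcases Nat.eq_zero_or_pos n with h0 | hpos
    · have hF1 : F = 1 := hF.natDegree_eq_zero.mp (hdeg.trans h0)
      rw [hF1, hchi.chi_one, natDegree_one, pow_zero, omega_one hchi]
    · have hnu : ¬ IsUnit F := not_isUnit_of_natDegree_pos F (by omega)
      obtain ⟨P, hPm, hPi, G, rfl⟩ := Polynomial.exists_monic_irreducible_factor F hnu
      have hG : G.Monic := hPm.of_mul_monic_left hF
      have hdP : 1 ≤ P.natDegree := hPi.natDegree_pos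
      have hmul : (P * G).natDegree = P.natDegree + G.natDegree :=
        natDegree_mul hPm.ne_zero hG.ne_zero
      have hGlt : G.natDegree < n := by omega
      have hx3 : (c ^ ((q - 1) / 3)) ^ 3 = 1 := cube_root_pow hq hq6 hcard hc
      have hcube : ∀ k : ℕ, ((c ^ ((q - 1) / 3)) ^ k) ^ 3 = 1 := by
        intro k; rw [← pow_mul, mul_comm, pow_mul, hx3, one_pow]
      rw [hchi.chi_mul_left P G (C c) hPm hG, chi_prime_eval hq hq6 hcard hchi hPm hPi hc,
        ih G.natDegree hGlt G rfl hG hc,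
        ← hchi.omega_mul _ _ (hcube _) (hcube _), ← pow_add, hmul]

include hq hq6 hcard in
lemma exists_order3 : ∃ c : Fq, c ≠ 0 ∧ ∀ d : ℕ, ((c ^ ((q - 1) / 3)) ^ d = 1 ↔ 3 ∣ d) := by
  have h7 := q_ge_7 hq hq6
  obtain ⟨ζ, hζ⟩ := IsCyclic.exists_generator (α := Fqˣ)
  have hord : orderOf ζ = q - 1 := by
    rw [orderOf_eq_card_of_forall_mem_zpowers hζ, Nat.card_eq_fintype_card, Fintype.card_units, hcard]
  obtain ⟨t, ht⟩ : ∃ t, q - 1 = 3 * t := ⟨(q - 1) / 3, by omega⟩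
  have ht0 : t ≠ 0 := by omega
  have hordu : orderOf (ζ ^ t) = 3 := by
    rw [orderOf_pow, hord, ht, Nat.gcd_eq_right ⟨3, by ring⟩, Nat.mul_div_cancel]
    omega
  refine ⟨(ζ : Fq), Units.ne_zero ζ, fun d => ?_⟩
  have ht3 : (q - 1) / 3 = t := by omega
  have hcoe : ((ζ : Fq) ^ ((q - 1) / 3)) ^ d = (((ζ ^ t) ^ d : Fqˣ) : Fq) := by
    rw [ht3]; push_cast; ring
  rw [hcoe]
  constructor
  · intro h
    have : (ζ ^ t) ^ d = 1 := Units.ext h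
    rw [← hordu]
    exact orderOf_dvd_of_pow_eq_one this
  · intro h
    have : (ζ ^ t) ^ d = 1 := orderOf_dvd_iff_pow_eq_one.mp (hordu ▸ h)
    rw [this, Units.val_one]

include hq hq6 hcard hchi in
lemma even_iff {F : Polynomial Fq} (hF : F.Monic) :
    IsEvenChar chi F ↔ 3 ∣ F.natDegree := by
  constructor
  · intro hev
    obtain ⟨c, hc, hc3⟩ := exists_order3 hq hq6 hcard
    have h1 := hev c hc
    rw [chi_monic_eval hq hq6 hcard hchi F.natDegree F rfl hF hc] at h1
    have hx3 : (c ^ ((q - 1) / 3)) ^ 3 = 1 := cube_root_pow hq hq6 hcard hc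
    have hcube : ((c ^ ((q - 1) / 3)) ^ F.natDegree) ^ 3 = 1 := by
      rw [← pow_mul, mul_comm, pow_mul, hx3, one_pow]
    have heq : (c ^ ((q - 1) / 3)) ^ F.natDegree = 1 :=
      hchi.omega_inj _ _ hcube (one_pow 3) (by rw [h1, omega_one hchi])
    exact (hc3 F.natDegree).mp heq
  · intro h3 c hc
    rw [chi_monic_eval hq hq6 hcard hchi F.natDegree F rfl hF hc]
    obtain ⟨k, hk⟩ := h3
    rw [hk, pow_mul, cube_root_pow hq hq6 hcard hc, one_pow, omega_one hchi]

end CharTheory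

/-- **Family sizes (Section 2.1).** With `𝔥(g) = {χ_F : F monic squarefree, genus χ_F = g}`
(in bijection with the set of such `F`): `|𝔥(g)| = q^{g+1} - q^g` if `g ≡ 0 (mod 3)`, and
then every member is odd with conductor of degree `g+1`; `|𝔥(g)| = q^{g+2} - q^g` if
`g ≡ 1 (mod 3)`, with members of conductor degree `g+1` (odd) or `g+2` (even); and
`𝔥(g) = ∅` if `g ≡ 2 (mod 3)`. -/
theorem family_size_by_genus
    (q : ℕ) (Fq : Type) [Field Fq] [Fintype Fq]
    (hq : IsPrimePow q) (hq6 : q % 6 = 1) (hcard : Fintype.card Fq = q)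
    (Ω : Fq → ℂ) (chi : Polynomial Fq → Polynomial Fq → ℂ)
    (hchi : IsCubicSymbol q Ω chi)
    (g : ℕ) (hg : 1 ≤ g) :
    (g % 3 = 0 →
      {F : Polynomial Fq | F.Monic ∧ Squarefree F ∧ genusChar chi F = (g : ℤ)}.ncard =
          q ^ (g + 1) - q ^ g ∧
        ∀ F : Polynomial Fq, F.Monic → Squarefree F → genusChar chi F = (g : ℤ) →
          ¬ IsEvenChar chi F ∧ F.natDegree = g + 1) ∧
    (g % 3 = 1 →
      {F : Polynomial Fq | F.Monic ∧ Squarefree F ∧ genusChar chi F = (g : ℤ)}.ncard =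
          q ^ (g + 2) - q ^ g ∧
        ∀ F : Polynomial Fq, F.Monic → Squarefree F → genusChar chi F = (g : ℤ) →
          (F.natDegree = g + 1 ∧ ¬ IsEvenChar chi F) ∨
          (F.natDegree = g + 2 ∧ IsEvenChar chi F)) ∧
    (g % 3 = 2 →
      {F : Polynomial Fq | F.Monic ∧ Squarefree F ∧ genusChar chi F = (g : ℤ)} = ∅) := by
  classical
  have hevF : ∀ F : Polynomial Fq, F.Monic → (IsEvenChar chi F ↔ 3 ∣ F.natDegree) :=
    fun F hF => even_iff hq hq6 hcard hchi hF
  have hgen : ∀ F : Polynomial Fq, F.Monic → genusChar chi F =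
      (F.natDegree : ℤ) - 2 + (if 3 ∣ F.natDegree then 0 else 1) := by
    intro F hF
    rw [genusChar]
    by_cases h : 3 ∣ F.natDegree
    · rw [if_pos ((hevF F hF).mpr h), if_pos h]
    · rw [if_neg (fun he => h ((hevF F hF).mp he)), if_neg h]
  refine ⟨?_, ?_, ?_⟩
  · -- g ≡ 0 (mod 3)
    intro h3
    have hset : {F : Polynomial Fq | F.Monic ∧ Squarefree F ∧ genusChar chi F = (g : ℤ)} =
        ↑(Sqf Fq (g + 1)) := by
      ext F
      simp only [Set.mem_setOf_eq, Finset.mem_coe, mem_Sqf]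
      constructor
      · rintro ⟨hm, hs, hgeq⟩
        rw [hgen F hm] at hgeq
        refine ⟨hm, hs, ?_⟩
        by_cases hd : 3 ∣ F.natDegree
        · rw [if_pos hd] at hgeq; omega
        · rw [if_neg hd] at hgeq; omega
      · rintro ⟨hm, hs, hd⟩
        refine ⟨hm, hs, ?_⟩
        rw [hgen F hm, if_neg (by omega), hd]
        push_cast; ring
    refine ⟨?_, ?_⟩
    · rw [hset, Set.ncard_coe_finset]
      have hc := card_Sqf (Fq := Fq) (g + 1) (by omega)
      rw [hcard] at hc
      have : g + 1 - 1 = g := by omega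
      rw [this] at hc
      omega
    · intro F hm hs hgeq
      have hmem : F ∈ Sqf Fq (g + 1) := by
        rw [← Finset.mem_coe, ← hset]; exact ⟨hm, hs, hgeq⟩
      have hd : F.natDegree = g + 1 := (mem_Sqf.mp hmem).2.2
      refine ⟨fun he => ?_, hd⟩
      have := (hevF F hm).mp he
      omega
  · -- g ≡ 1 (mod 3)
    intro h3
    have hset : {F : Polynomial Fq | F.Monic ∧ Squarefree F ∧ genusChar chi F = (g : ℤ)} =
        ↑(Sqf Fq (g + 1) ∪ Sqf Fq (g + 2)) := by
      ext F
      simp only [Set.mem_setOf_eq, Finset.coe_union, Set.mem_union, Finset.mem_coe, mem_Sqf]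
      constructor
      · rintro ⟨hm, hs, hgeq⟩
        rw [hgen F hm] at hgeq
        by_cases hd : 3 ∣ F.natDegree
        · rw [if_pos hd] at hgeq
          exact Or.inr ⟨hm, hs, by omega⟩
        · rw [if_neg hd] at hgeq
          exact Or.inl ⟨hm, hs, by omega⟩
      · rintro (⟨hm, hs, hd⟩ | ⟨hm, hs, hd⟩)
        · refine ⟨hm, hs, ?_⟩
          rw [hgen F hm, if_neg (by omega), hd]
          push_cast; ring
        · refine ⟨hm, hs, ?_⟩
          rw [hgen F hm, if_pos (by omega), hd]
          push_cast; ring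
    refine ⟨?_, ?_⟩
    · rw [hset, Set.ncard_coe_finset, Finset.card_union_of_disjoint]
      · have hc1 := card_Sqf (Fq := Fq) (g + 1) (by omega)
        have hc2 := card_Sqf (Fq := Fq) (g + 2) (by omega)
        rw [hcard] at hc1 hc2
        have e1 : g + 1 - 1 = g := by omega
        have e2 : g + 2 - 1 = g + 1 := by omega
        rw [e1] at hc1; rw [e2] at hc2
        omega
      · simp only [Finset.disjoint_left, mem_Sqf]
        rintro F ⟨-, -, h1⟩ ⟨-, -, h2⟩
        omega
    · intro F hm hs hgeq
      have hmem : F ∈ Sqf Fq (g + 1) ∪ Sqf Fq (g + 2) := by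
        rw [← Finset.mem_coe, ← hset]; exact ⟨hm, hs, hgeq⟩
      rcases Finset.mem_union.mp hmem with h | h
      · have hd : F.natDegree = g + 1 := (mem_Sqf.mp h).2.2
        refine Or.inl ⟨hd, fun he => ?_⟩
        have := (hevF F hm).mp he
        omega
      · have hd : F.natDegree = g + 2 := (mem_Sqf.mp h).2.2
        exact Or.inr ⟨hd, (hevF F hm).mpr (by omega)⟩
  · -- g ≡ 2 (mod 3)
    intro h3
    rw [Set.eq_empty_iff_forall_notMem]
    rintro F ⟨hm, hs, hgeq⟩
    rw [hgen F hm] at hgeq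
    by_cases hd : 3 ∣ F.natDegree
    · rw [if_pos hd] at hgeq; omega
    · rw [if_neg hd] at hgeq; omega
end
end
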